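/- arXiv:1803.09633 — 2 statements merged into one kernel-verified Lean document; each statement's English description precedes it below -/
import Mathlib

section
/- Let a < b be real numbers, let f : ℝ → ℝ be continuous on [a,b], and let H : ℝ → ℝ satisfy HasDerivWithinAt H (f x) (Set.Icc a b) x for every x ∈ [a,b]. Then for every N : ℕ → ℕ with ofSeq (fun n ↦ (N n : ℝ)) infinite positive, the omega sum of f over [a,b] along N is infinitely close to H(b) − H(a), i.e., IsSt (ofSeq (fun n ↦ ∑_{k=1}^{N n} f(a + k·(b−a)/(N n)) · (b−a)/(N n))) (H b − H a) holds. -/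
open Hyperreal Filter Set

theorem riemann_tendsto
    (a b : ℝ) (hab : a < b) (f : ℝ → ℝ) (hf : ContinuousOn f (Set.Icc a b))
    (H : ℝ → ℝ) (hH : ∀ x ∈ Set.Icc a b, HasDerivWithinAt H (f x) (Set.Icc a b) x) :
    Tendsto (fun M : ℕ =>
        ∑ k ∈ Finset.Icc 1 M, f (a + k * (b - a) / M) * ((b - a) / M))
      atTop (nhds (H b - H a)) := by
  have hba : (0:ℝ) < b - a := sub_pos.2 hab
  have hHc : ContinuousOn H (Set.Icc a b) := fun x hx => (hH x hx).continuousWithinAt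
  have hfu := isCompact_Icc.uniformContinuousOn_of_continuous hf
  rw [Metric.uniformContinuousOn_iff] at hfu
  rw [Metric.tendsto_atTop]
  intro eps heps
  have heps' : 0 < eps / (2 * (b - a)) := by positivity
  obtain ⟨δ, hδ, hδeps⟩ := hfu _ heps'
  obtain ⟨M0, hM0⟩ := exists_nat_gt ((b - a) / δ)
  refine ⟨M0 + 1, fun M hM => ?_⟩
  have hM1 : 1 ≤ M := le_trans (Nat.le_add_left 1 M0) hM
  have hMpos : (0:ℝ) < M := by exact_mod_cast hM1
  set Δ : ℝ := (b - a) / M with hΔ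
  have hΔpos : 0 < Δ := div_pos hba hMpos
  have hΔδ : Δ < δ := by
    rw [hΔ, div_lt_iff₀ hMpos]
    have h1 : b - a < δ * M0 := by
      rw [div_lt_iff₀ hδ] at hM0; linarith [hM0]
    have h2 : (M0 : ℝ) ≤ M := by exact_mod_cast le_trans (Nat.le_succ M0) hM
    nlinarith
  set x : ℕ → ℝ := fun k => a + k * Δ with hxdef
  have hxmem : ∀ k, k ≤ M → x k ∈ Set.Icc a b := by
    intro k hk
    have hk' : (k:ℝ) ≤ M := by exact_mod_cast hk
    constructor
    · simp only [hxdef]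
      nlinarith [mul_nonneg (Nat.cast_nonneg k) hΔpos.le]
    · simp only [hxdef, hΔ]
      rw [← sub_nonneg]
      have : (k:ℝ) * ((b-a)/M) ≤ (M:ℝ) * ((b-a)/M) :=
        mul_le_mul_of_nonneg_right hk' (le_of_lt hΔpos)
      have hMeq : (M:ℝ) * ((b-a)/M) = b - a := by field_simp
      linarith
  have hxM : x M = b := by
    simp only [hxdef, hΔ]
    field_simp
    ring
  have hx0 : x 0 = a := by simp [hxdef]
  have hstep : ∀ i : ℕ, x (i+1) - x i = Δ := by
    intro i; simp only [hxdef]; push_cast; ring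
  have hlt : ∀ i : ℕ, x i < x (i+1) := by
    intro i
    have := hstep i; linarith
  have key : ∀ i : ℕ, i < M → ∃ c ∈ Set.Ioo (x i) (x (i+1)),
      H (x (i+1)) - H (x i) = f c * Δ := by
    intro i hi
    have hsub : Set.Icc (x i) (x (i+1)) ⊆ Set.Icc a b :=
      Set.Icc_subset_Icc (hxmem i hi.le).1 (hxmem (i+1) hi).2
    have hderiv : ∀ y ∈ Set.Ioo (x i) (x (i+1)), HasDerivAt H (f y) y := by
      intro y hy
      have hy1 : a < y := lt_of_le_of_lt (hxmem i hi.le).1 hy.1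
      have hy2 : y < b := lt_of_lt_of_le hy.2 (hxmem (i+1) hi).2
      have hyI : y ∈ Set.Icc a b := ⟨hy1.le, hy2.le⟩
      exact (hH y hyI).hasDerivAt (Icc_mem_nhds hy1 hy2)
    obtain ⟨c, hc, hceq⟩ := exists_hasDerivAt_eq_slope H f (hlt i) (hHc.mono hsub) hderiv
    refine ⟨c, hc, ?_⟩
    rw [hceq, hstep i]
    field_simp
  choose c hc hceq using key
  have hsum : (∑ k ∈ Finset.Icc 1 M, f (a + k * (b - a) / M) * ((b - a) / M))
      = ∑ i ∈ Finset.range M, f (x (i+1)) * Δ := by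
    rw [← Finset.Ico_add_one_right_eq_Icc, Finset.sum_Ico_eq_sum_range]
    refine Finset.sum_congr (by norm_num) fun i _ => ?_
    simp only [hxdef, hΔ]
    push_cast
    ring_nf
  have htel : H b - H a = ∑ i ∈ Finset.range M, (H (x (i+1)) - H (x i)) := by
    rw [Finset.sum_range_sub (fun k => H (x k)), hxM, hx0]
  rw [Real.dist_eq, hsum, htel, ← Finset.sum_sub_distrib]
  have hbound : ∀ i ∈ Finset.range M,
      |f (x (i+1)) * Δ - (H (x (i+1)) - H (x i))| ≤ eps / (2 * (b - a)) * Δ := by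
    intro i hi
    have hi' : i < M := Finset.mem_range.1 hi
    rw [hceq i hi', ← sub_mul, abs_mul, abs_of_pos hΔpos]
    refine mul_le_mul_of_nonneg_right ?_ hΔpos.le
    have hcmem : c i hi' ∈ Set.Icc a b := by
      have := hc i hi'
      exact ⟨le_trans (hxmem i hi'.le).1 this.1.le, le_trans this.2.le (hxmem (i+1) hi').2⟩
    have hxm : x (i+1) ∈ Set.Icc a b := hxmem (i+1) hi'
    have hdist : dist (x (i+1)) (c i hi') < δ := by
      rw [Real.dist_eq, abs_of_pos (by linarith [(hc i hi').2])]
      have := (hc i hi').1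
      have := hstep i
      linarith [hΔδ]
    have := hδeps (x (i+1)) hxm (c i hi') hcmem hdist
    rw [Real.dist_eq] at this
    exact this.le
  calc |∑ i ∈ Finset.range M, (f (x (i+1)) * Δ - (H (x (i+1)) - H (x i)))|
      ≤ ∑ i ∈ Finset.range M, |f (x (i+1)) * Δ - (H (x (i+1)) - H (x i))| :=
        Finset.abs_sum_le_sum_abs _ _
    _ ≤ ∑ _i ∈ Finset.range M, eps / (2 * (b - a)) * Δ := Finset.sum_le_sum hbound
    _ = M * (eps / (2 * (b - a)) * Δ) := by
        rw [Finset.sum_const, Finset.card_range, nsmul_eq_mul]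
    _ = eps / 2 := by
        rw [hΔ]; field_simp
    _ < eps := by linarith

/-- Theorem 5 (FTC II): if `f` is continuous on `[a,b]` and `H` is an antiderivative
of `f` on `[a,b]`, then every omega sum of `f` over `[a,b]` is infinitely close to
`H b − H a`. -/
theorem ftc_two_omega
    (a b : ℝ) (hab : a < b) (f : ℝ → ℝ) (hf : ContinuousOn f (Set.Icc a b))
    (H : ℝ → ℝ) (hH : ∀ x ∈ Set.Icc a b, HasDerivWithinAt H (f x) (Set.Icc a b) x)
    (N : ℕ → ℕ) (hN : (ofSeq fun n => (N n : ℝ)).InfinitePos) :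
    IsSt (ofSeq fun n =>
        ∑ k ∈ Finset.Icc 1 (N n), f (a + k * (b - a) / (N n)) * ((b - a) / (N n)))
      (H b - H a) := by
  have hNt : Tendsto N (Filter.hyperfilter ℕ : Filter ℕ) atTop := by
    rw [Filter.tendsto_atTop]
    intro m
    have h2 : ofSeq (fun _ => (m:ℝ)) < ofSeq (fun n => (N n:ℝ)) := hN m
    filter_upwards [ofSeq_lt_ofSeq.1 h2] with n hn
    exact_mod_cast hn.le
  rw [isSt_ofSeq_iff_tendsto]
  exact (riemann_tendsto a b hab f hf H hH).comp hNt
end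

section
/- Let a < b be real numbers and let f : ℝ → ℝ be continuous on [a,b]. Then for every N : ℕ → ℕ with ofSeq (fun n ↦ (N n : ℝ)) infinite positive, the omega sum of f over [a,b] along N is infinitely close to the interval integral ∫ x in a..b, f x, i.e., IsSt (ofSeq (fun n ↦ ∑_{k=1}^{N n} f(a + k·(b−a)/(N n)) · (b−a)/(N n))) (∫ x in a..b, f x) holds. -/
open Hyperreal Filter MeasureTheory Topology

private lemma riemann_sum_tendsto (a b : ℝ) (hab : a < b) (f : ℝ → ℝ)
    (hf : ContinuousOn f (Set.Icc a b)) :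
    Tendsto (fun M : ℕ =>
        ∑ k ∈ Finset.Icc 1 M, f (a + k * (b - a) / M) * ((b - a) / M))
      atTop (𝓝 (∫ x in a..b, f x)) := by
  rw [Metric.tendsto_atTop]
  intro eps heps
  have hba : (0:ℝ) < b - a := sub_pos.2 hab
  set eps' : ℝ := eps / (2 * (b - a)) with heps'def
  have heps' : 0 < eps' := by positivity
  have huc : UniformContinuousOn f (Set.Icc a b) :=
    isCompact_Icc.uniformContinuousOn_of_continuous hf
  rw [Metric.uniformContinuousOn_iff] at huc
  obtain ⟨δ, hδ, hδf⟩ := huc eps' heps'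
  obtain ⟨M₀, hM₀⟩ := exists_nat_gt ((b - a) / δ)
  refine ⟨M₀ + 1, fun M hM => ?_⟩
  have hMpos : 0 < M := lt_of_lt_of_le (Nat.succ_pos M₀) hM
  have hMR : (0:ℝ) < M := by exact_mod_cast hMpos
  have hMne : (M:ℝ) ≠ 0 := ne_of_gt hMR
  have hΔpos : (0:ℝ) < (b - a) / M := div_pos hba hMR
  have hΔδ : (b - a) / M < δ := by
    have h1 : (b - a) / δ < (M:ℝ) :=
      hM₀.trans_le (by exact_mod_cast le_trans (Nat.le_succ M₀) hM)
    rw [div_lt_iff₀ hMR]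
    calc b - a = (b - a) / δ * δ := by field_simp
      _ < M * δ := mul_lt_mul_of_pos_right h1 hδ
      _ = δ * M := mul_comm _ _
  obtain ⟨x, hxdef⟩ : ∃ x : ℕ → ℝ, x = fun k : ℕ => a + (k : ℝ) * (b - a) / M := ⟨_, rfl⟩
  have hxstep : ∀ k : ℕ, x (k + 1) - x k = (b - a) / M := by
    intro k
    simp only [hxdef]
    push_cast
    ring
  have hxmono : ∀ k : ℕ, x k ≤ x (k + 1) := fun k => by
    linarith [hxstep k, hΔpos]
  have hxmem : ∀ k ≤ M, x k ∈ Set.Icc a b := by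
    intro k hk
    have hkR : (k:ℝ) ≤ M := by exact_mod_cast hk
    constructor
    · simp only [hxdef]
      have : 0 ≤ (k:ℝ) * (b - a) / M := by positivity
      linarith
    · simp only [hxdef]
      have : (k:ℝ) * (b - a) / M ≤ b - a := by
        rw [div_le_iff₀ hMR]
        nlinarith
      linarith
  have hint : ∀ k < M, IntervalIntegrable f volume (x k) (x (k + 1)) := by
    intro k hk
    apply ContinuousOn.intervalIntegrable
    apply hf.mono
    rw [Set.uIcc_of_le (hxmono k)]
    exact Set.Icc_subset_Icc (hxmem k hk.le).1 (hxmem (k + 1) hk).2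
  have hsplit : ∑ k ∈ Finset.range M, ∫ t in x k..x (k + 1), f t
      = ∫ t in a..b, f t := by
    rw [intervalIntegral.sum_integral_adjacent_intervals hint]
    congr 1
    · simp [hxdef]
    · simp only [hxdef]
      field_simp
      ring
  have hsum : ∑ k ∈ Finset.Icc 1 M, f (a + k * (b - a) / M) * ((b - a) / M)
      = ∑ k ∈ Finset.range M, f (x (k + 1)) * ((b - a) / M) := by
    rw [show Finset.Icc 1 M = Finset.Ico 1 (M + 1) by rfl,
      Finset.sum_Ico_eq_sum_range]
    simp only [Nat.add_sub_cancel]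
    refine Finset.sum_congr rfl fun k _ => ?_
    simp [hxdef, add_comm 1 k]
  rw [Real.dist_eq, hsum, ← hsplit, ← Finset.sum_sub_distrib]
  have hterm : ∀ k ∈ Finset.range M,
      |f (x (k + 1)) * ((b - a) / M) - ∫ t in x k..x (k + 1), f t|
        ≤ eps' * ((b - a) / M) := by
    intro k hk
    rw [Finset.mem_range] at hk
    have heq : f (x (k + 1)) * ((b - a) / M) - (∫ t in x k..x (k + 1), f t)
        = ∫ t in x k..x (k + 1), (f (x (k + 1)) - f t) := by
      rw [intervalIntegral.integral_sub intervalIntegrable_const (hint k hk),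
        intervalIntegral.integral_const, hxstep k, smul_eq_mul, mul_comm]
    rw [heq]
    have hb1 : ∀ t ∈ Set.uIoc (x k) (x (k + 1)), ‖f (x (k + 1)) - f t‖ ≤ eps' := by
      intro t ht
      rw [Set.uIoc_of_le (hxmono k), Set.mem_Ioc] at ht
      have htmem : t ∈ Set.Icc a b := by
        have h1 := (hxmem k hk.le).1
        have h2 := (hxmem (k + 1) hk).2
        exact ⟨le_trans h1 ht.1.le, le_trans ht.2 h2⟩
      have hdist : dist (x (k + 1)) t < δ := by
        rw [Real.dist_eq, abs_of_nonneg (by linarith [ht.2])]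
        have := hxstep k
        linarith [ht.1, hΔδ]
      have := hδf (x (k + 1)) (hxmem (k + 1) hk) t htmem hdist
      rw [Real.dist_eq] at this
      exact this.le
    calc |∫ t in x k..x (k + 1), (f (x (k + 1)) - f t)|
        ≤ eps' * |x (k + 1) - x k| :=
          intervalIntegral.norm_integral_le_of_norm_le_const hb1
      _ = eps' * ((b - a) / M) := by rw [hxstep k, abs_of_pos hΔpos]
  calc |∑ k ∈ Finset.range M,
        (f (x (k + 1)) * ((b - a) / M) - ∫ t in x k..x (k + 1), f t)|
      ≤ ∑ k ∈ Finset.range M,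
        |f (x (k + 1)) * ((b - a) / M) - ∫ t in x k..x (k + 1), f t| :=
        Finset.abs_sum_le_sum_abs _ _
    _ ≤ ∑ _k ∈ Finset.range M, eps' * ((b - a) / M) := Finset.sum_le_sum hterm
    _ = M * (eps' * ((b - a) / M)) := by
        rw [Finset.sum_const, Finset.card_range, nsmul_eq_mul]
    _ = eps' * (b - a) := by field_simp
    _ = eps / 2 := by rw [heps'def]; field_simp
    _ < eps := by linarith

/-- The omega integral of a continuous function coincides with its interval
(Riemann) integral: every omega sum of `f` over `[a,b]` is infinitely close to
`∫ x in a..b, f x`. -/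
theorem omega_integral_eq_intervalIntegral
    (a b : ℝ) (hab : a < b) (f : ℝ → ℝ) (hf : ContinuousOn f (Set.Icc a b))
    (N : ℕ → ℕ) (hN : (ofSeq fun n => (N n : ℝ)).InfinitePos) :
    IsSt (ofSeq fun n =>
        ∑ k ∈ Finset.Icc 1 (N n), f (a + k * (b - a) / (N n)) * ((b - a) / (N n)))
      (∫ x in a..b, f x) := by
  have hNt : Tendsto N (hyperfilter ℕ : Filter ℕ) atTop := by
    rw [tendsto_atTop]
    intro m
    have h := hN (m : ℝ)
    rw [show ((m : ℝ) : ℝ*) = ofSeq (fun _ => (m : ℝ)) from rfl, ofSeq_lt_ofSeq] at h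
    filter_upwards [h] with n hn
    exact_mod_cast hn.le
  exact isSt_ofSeq_iff_tendsto.2
    ((riemann_sum_tendsto a b hab f hf).comp hNt)
end
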